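/- arXiv:2109.01310 — 7 statements merged into one kernel-verified Lean document; each statement's English description precedes it below -/
import Mathlib

section
/- Let G be a δ-degenerate graph on n ≥ 1 vertices. Then there is a partition T_1, …, T_m of V(G) with m ≤ log₂ n (when n ≥ 2; m ≤ 1 when n = 1) such that for every i and every v ∈ T_i, the degree of v in the induced subgraph G[V(G) \ (T_1 ∪ ⋯ ∪ T_{i−1})] is at most 4δ. -/
/-!
Peel the graph: starting from `V`, delete in each round every vertex whose degree in the
remaining graph is at most `4d`. Since a `d`-degenerate graph on `W` has fewer than `d |W|`
edges, fewer than half of the remaining vertices can have degree above `4d`, so every round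
at least halves what is left and `max 1 (log₂ n)` rounds exhaust `V`. The layers deleted in
successive rounds are the parts.
-/

universe u v

variable {V : Type u}

/-- The open neighborhood of a set `D`: vertices outside `D` with a neighbor in `D`. -/
def nbhd (G : SimpleGraph V) (D : Set V) : Set V :=
  {w | w ∉ D ∧ ∃ u ∈ D, G.Adj u w}

/-- `u` and `w` are joined by a walk all of whose vertices lie in `S`. -/
def ConnectedIn (G : SimpleGraph V) (S : Set V) (u w : V) : Prop :=
  ∃ p : G.Walk u w, ∀ x ∈ p.support, x ∈ S

/-- `D` is a connected component of the subgraph of `G` induced on `S`. -/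
def IsCompOf (G : SimpleGraph V) (S : Set V) (D : Set V) : Prop :=
  D.Nonempty ∧ D ⊆ S ∧ (∀ u ∈ D, ∀ w ∈ D, ConnectedIn G D u w) ∧
    ∀ u ∈ D, ∀ w ∈ S, G.Adj u w → w ∈ D

/-- `X` is a minimal separator: some `u, w` outside `X` are separated by `X`
but by no proper subset of `X`. -/
def IsMinimalSeparator (G : SimpleGraph V) (X : Set V) : Prop :=
  ∃ u w : V, u ∉ X ∧ w ∉ X ∧ ¬ ConnectedIn G Xᶜ u w ∧
    ∀ Y : Set V, Y ⊂ X → ConnectedIn G Yᶜ u w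

/-- A tree decomposition of the subgraph of `G` induced on `W`. -/
structure IsTreeDecompOn {T : Type v} (G : SimpleGraph V) (W : Set V)
    (tree : SimpleGraph T) (χ : T → Set V) : Prop where
  isTree : tree.IsTree
  bags_subset : ∀ t, χ t ⊆ W
  mem_bag : ∀ x ∈ W, ∃ t, x ∈ χ t
  edge_bag : ∀ x ∈ W, ∀ y ∈ W, G.Adj x y → ∃ t, x ∈ χ t ∧ y ∈ χ t
  trace_connected : ∀ x : V, ∀ t₁, x ∈ χ t₁ → ∀ t₂, x ∈ χ t₂ →
    ConnectedIn tree {t | x ∈ χ t} t₁ t₂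

/-- A tree decomposition of `G`. -/
def IsTreeDecomp {T : Type v} (G : SimpleGraph V)
    (tree : SimpleGraph T) (χ : T → Set V) : Prop :=
  IsTreeDecompOn G Set.univ tree χ

/-- The treewidth of `G`: the least `w` such that `G` has a tree decomposition
all of whose bags have at most `w + 1` vertices. -/
noncomputable def treewidth (G : SimpleGraph V) : ℕ :=
  sInf {w | ∃ (n : ℕ) (tree : SimpleGraph (Fin n)) (χ : Fin n → Set V),
    IsTreeDecomp G tree χ ∧ ∀ t, (χ t).ncard ≤ w + 1}

/-- `G` is chordal: it has no induced cycle of length at least 4. -/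
def IsChordal (G : SimpleGraph V) : Prop :=
  ∀ n : ℕ, 4 ≤ n → ¬ ∃ f : Fin n → V, Function.Injective f ∧
    ∀ i j : Fin n, G.Adj (f i) (f j) ↔
      ((i.val + 1) % n = j.val ∨ (j.val + 1) % n = i.val)

/-- `H` is a minimal chordal completion (fill-in) of `G`. -/
def IsMinimalChordalCompletion (G H : SimpleGraph V) : Prop :=
  G ≤ H ∧ IsChordal H ∧
    ∀ H' : SimpleGraph V, G ≤ H' → H' ≤ H → IsChordal H' → H' = H

/-- `Ω` is a potential maximal clique of `G`: a maximal clique of some minimal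
chordal completion of `G`. -/
def IsPMC (G : SimpleGraph V) (Ω : Set V) : Prop :=
  ∃ H : SimpleGraph V, IsMinimalChordalCompletion G H ∧
    H.IsClique Ω ∧ ∀ Ω' : Set V, H.IsClique Ω' → Ω ⊆ Ω' → Ω' = Ω

/-- The clique number `ω(G)`. -/
noncomputable def cliqueNumber (G : SimpleGraph V) : ℕ :=
  sSup {n | ∃ s : Finset V, G.IsNClique n s}

/-- A stable (independent) set of vertices. -/
def StableSet (G : SimpleGraph V) (S : Set V) : Prop :=
  ∀ u ∈ S, ∀ w ∈ S, ¬ G.Adj u w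

/-- The Ramsey number `R(t, s)`: the least `n` such that every graph on `n`
vertices contains a clique of size `t` or a stable set of size `s`. -/
noncomputable def ramseyNum (t s : ℕ) : ℕ :=
  sInf {n | ∀ G : SimpleGraph (Fin n),
    (∃ K : Finset (Fin n), G.IsNClique t K) ∨
    (∃ S : Finset (Fin n), S.card = s ∧ StableSet G ↑S)}

/-- `G` is `d`-degenerate: every induced subgraph has a vertex of degree less
than `d` (within that subgraph). -/
def DegenerateLE (G : SimpleGraph V) (d : ℕ) : Prop :=
  ∀ W : Set V, W.Nonempty → ∃ x ∈ W, (W ∩ G.neighborSet x).ncard < d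

/-- `D` is the big component for `x`: a component of `G \ N[x]` with more than
half of all vertices. -/
def IsBigComp (G : SimpleGraph V) (x : V) (D : Set V) : Prop :=
  IsCompOf G ((insert x (G.neighborSet x))ᶜ) D ∧ Nat.card V < 2 * D.ncard

/-- The `C`-side of the canonical star separation: `C(x) = {x} ∪ N(B(x))`. -/
def Cside (G : SimpleGraph V) (B : V → Set V) (x : V) : Set V :=
  insert x (nbhd G (B x))

/-- The `A`-side of the canonical star separation. -/
def Aside (G : SimpleGraph V) (B : V → Set V) (x : V) : Set V :=
  (B x ∪ Cside G B x)ᶜ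

/-- Star twins. -/
def StarTwins (G : SimpleGraph V) (B : V → Set V) (x y : V) : Prop :=
  B x = B y ∧ Cside G B x \ {x} = Cside G B y \ {y} ∧
    Aside G B x ∪ {x} = Aside G B y ∪ {y}

/-- The relation `≤_A` (partial order by `A`-sides, ties among star twins
broken by the total order `O`). -/
def leA (G : SimpleGraph V) (B : V → Set V) (O : V → ℕ) (x y : V) : Prop :=
  x = y ∨ (StarTwins G B x y ∧ O x < O y) ∨
    (¬ StarTwins G B x y ∧ y ∈ Aside G B x)

/-- `Core(S)`: the `≤_A`-minimal elements of `S`. -/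
def CoreS (G : SimpleGraph V) (S : Set V) (B : V → Set V) (O : V → ℕ) : Set V :=
  {x ∈ S | ∀ u ∈ S, leA G B O u x → u = x}

/-- The central bag `β(S)`. -/
def centralBag (G : SimpleGraph V) (S : Set V) (B : V → Set V) (O : V → ℕ) :
    Set V :=
  ⋂ x ∈ CoreS G S B O, (B x ∪ Cside G B x)

/-- `G` has a clique cutset. -/
def HasCliqueCutset (G : SimpleGraph V) : Prop :=
  ∃ K : Set V, G.IsClique K ∧ ∃ u w, u ∉ K ∧ w ∉ K ∧ ¬ ConnectedIn G Kᶜ u w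

/-- A chordless (induced) path, as a walk. -/
def IsInducedPathW (G : SimpleGraph V) {a b : V} (P : G.Walk a b) : Prop :=
  P.IsPath ∧ ∀ i j : ℕ, i + 2 ≤ j → j ≤ P.length →
    ¬ G.Adj (P.getVert i) (P.getVert j)

/-- Two `a`–`b` walks have disjoint and anticomplete interiors. -/
def IntDisjAnticomplete (G : SimpleGraph V) {a b : V} (P Q : G.Walk a b) : Prop :=
  ∀ u ∈ P.support, ∀ w ∈ Q.support, u ≠ a → u ≠ b → w ≠ a → w ≠ b →
    u ≠ w ∧ ¬ G.Adj u w

/-- `G` contains a theta (as an induced subgraph). -/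
def HasTheta (G : SimpleGraph V) : Prop :=
  ∃ (a b : V) (P₁ P₂ P₃ : G.Walk a b),
    ¬ G.Adj a b ∧
    IsInducedPathW G P₁ ∧ 2 ≤ P₁.length ∧
    IsInducedPathW G P₂ ∧ 2 ≤ P₂.length ∧
    IsInducedPathW G P₃ ∧ 2 ≤ P₃.length ∧
    IntDisjAnticomplete G P₁ P₂ ∧
    IntDisjAnticomplete G P₁ P₃ ∧
    IntDisjAnticomplete G P₂ P₃


open Finset

theorem isEmpty_of_degenerateLE_zero {G : SimpleGraph V} (hG : DegenerateLE G 0) : IsEmpty V :=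
  not_nonempty_iff.mp fun ⟨v⟩ => by
    obtain ⟨x, -, hx⟩ := hG {v} (Set.singleton_nonempty v)
    exact Nat.not_lt_zero _ hx

section Degenerate

variable {G : SimpleGraph V} [DecidableRel G.Adj] {d : ℕ}

theorem ncard_inter_neighborSet (W : Finset V) (v : V) :
    ((W : Set V) ∩ G.neighborSet v).ncard = #{u ∈ W | G.Adj v u} := by
  rw [← Set.ncard_coe_finset, coe_filter]
  rfl

variable [DecidableEq V]

theorem sum_card_filter_adj_insert {x : V} {W : Finset V} (hx : x ∉ W) :
    ∑ v ∈ insert x W, #{u ∈ insert x W | G.Adj v u} =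
      ∑ v ∈ W, #{u ∈ W | G.Adj v u} + 2 * #{u ∈ W | G.Adj x u} := by
  simp only [card_filter, sum_insert hx, G.irrefl, if_false, zero_add, sum_add_distrib,
    G.adj_comm _ x]
  ring

theorem sum_card_filter_adj_le_of_degenerateLE (hG : DegenerateLE G d) (W : Finset V) :
    ∑ v ∈ W, #{u ∈ W | G.Adj v u} ≤ 2 * d * #W := by
  induction W using Finset.strongInduction with
  | H W ih =>
    rcases W.eq_empty_or_nonempty with rfl | hW
    · simp
    obtain ⟨x, hxW, hx⟩ := hG W (coe_nonempty.mpr hW)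
    rw [ncard_inter_neighborSet] at hx
    have hsub : {u ∈ W.erase x | G.Adj x u} ⊆ {u ∈ W | G.Adj x u} :=
      filter_subset_filter _ (erase_subset x W)
    rw [← insert_erase hxW, sum_card_filter_adj_insert (notMem_erase x W),
      card_insert_of_notMem (notMem_erase x W)]
    have := ih _ (erase_ssubset hxW)
    have := card_le_card hsub
    linarith

end Degenerate

section Peeling

variable [Fintype V] (G : SimpleGraph V) [DecidableRel G.Adj]

def peel (k : ℕ) : ℕ → Finset V
  | 0 => univ
  | i + 1 => {v ∈ peel k i | k < #{u ∈ peel k i | G.Adj v u}}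

variable {G} {k d : ℕ}

theorem peel_succ (i : ℕ) :
    peel G k (i + 1) = {v ∈ peel G k i | k < #{u ∈ peel G k i | G.Adj v u}} := rfl

theorem peel_antitone : Antitone (peel G k) :=
  antitone_nat_of_succ_le fun _ => filter_subset _ _

theorem card_filter_adj_le_of_notMem_peel_succ {i : ℕ} {v : V} (hv : v ∈ peel G k i)
    (hv' : v ∉ peel G k (i + 1)) : #{u ∈ peel G k i | G.Adj v u} ≤ k := by
  simpa [peel_succ, hv] using hv'

theorem add_two_le_card_peel {i : ℕ} (h : (peel G k (i + 1)).Nonempty) :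
    k + 2 ≤ #(peel G k i) := by
  obtain ⟨v, hv⟩ := h
  rw [peel_succ, mem_filter] at hv
  have : {u ∈ peel G k i | G.Adj v u} ⊂ peel G k i :=
    filter_ssubset.mpr ⟨v, hv.1, G.irrefl⟩
  have := card_lt_card this
  omega

variable [DecidableEq V]

theorem succ_mul_card_peel_succ_le (hG : DegenerateLE G d) (i : ℕ) :
    (k + 1) * #(peel G k (i + 1)) ≤ 2 * d * #(peel G k i) :=
  calc (k + 1) * #(peel G k (i + 1))
      ≤ ∑ v ∈ peel G k (i + 1), #{u ∈ peel G k i | G.Adj v u} := by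
        rw [mul_comm, ← smul_eq_mul]
        exact card_nsmul_le_sum _ _ _ fun v hv => (mem_filter.mp hv).2
    _ ≤ ∑ v ∈ peel G k i, #{u ∈ peel G k i | G.Adj v u} :=
        sum_le_sum_of_subset (peel_antitone (Nat.le_succ i))
    _ ≤ 2 * d * #(peel G k i) := sum_card_filter_adj_le_of_degenerateLE hG _

theorem two_pow_mul_card_peel_le (hG : DegenerateLE G d) (hk : 4 * d ≤ k)
    (i : ℕ) : 2 ^ i * #(peel G k i) ≤ Nat.card V := by
  induction i with
  | zero => simp [peel]
  | succ i ih =>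
    have := succ_mul_card_peel_succ_le (k := k) hG i
    have : 2 * #(peel G k (i + 1)) ≤ #(peel G k i) := by nlinarith
    calc 2 ^ (i + 1) * #(peel G k (i + 1)) = 2 ^ i * (2 * #(peel G k (i + 1))) := by ring
      _ ≤ 2 ^ i * #(peel G k i) := Nat.mul_le_mul_left _ this
      _ ≤ Nat.card V := ih

/-- A vertex surviving round `j + 1` has more than `k ≥ 4` neighbours in round `j` (`d ≥ 1`
as `V` is nonempty), while round `j` has at most `n / 2 ^ j < 4` vertices. -/
theorem peel_eq_empty (hG : DegenerateLE G d) (hk : 4 * d ≤ k) {i : ℕ} (hi : 1 ≤ i)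
    (hV : Nat.card V < 2 ^ (i + 1)) : peel G k i = ∅ := by
  obtain ⟨j, rfl⟩ := Nat.exists_eq_add_of_le' hi
  refine not_nonempty_iff_eq_empty.mp fun hne => ?_
  have hd : d ≠ 0 := by
    rintro rfl
    obtain ⟨v, -⟩ := hne
    exact (isEmpty_of_degenerateLE_zero hG).false v
  have hcard := add_two_le_card_peel hne
  have hpow := two_pow_mul_card_peel_le hG hk j
  have : 2 ^ j * 4 ≤ 2 ^ j * #(peel G k j) := Nat.mul_le_mul_left _ (by omega)
  rw [pow_succ, pow_succ] at hV
  omega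

end Peeling

theorem Antitone.pairwise_disjoint_sdiff_succ {α : Type*} {R : ℕ → Set α} (hR : Antitone R) :
    Pairwise (Function.onFun Disjoint fun i => R i \ R (i + 1)) :=
  (pairwise_disjoint_on _).mpr fun _ _ hij =>
    Set.disjoint_left.mpr fun _ hx hy => hx.2 (hR hij hy.1)

theorem exists_lt_mem_sdiff_succ {α : Type*} {R : ℕ → Set α} {x : α} (h0 : x ∈ R 0) :
    ∀ {m : ℕ}, x ∉ R m → ∃ i < m, x ∈ R i \ R (i + 1)
  | 0, hm => absurd h0 hm
  | m + 1, hm => by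
    by_cases hx : x ∈ R m
    · exact ⟨m, Nat.lt_succ_self m, hx, hm⟩
    · obtain ⟨i, hi, hxi⟩ := exists_lt_mem_sdiff_succ h0 hx
      exact ⟨i, Nat.lt_succ_of_lt hi, hxi⟩

theorem stmt6_general [Finite V] (G : SimpleGraph V) (d : ℕ) (h : DegenerateLE G d) :
    ∃ (m : ℕ) (P : Fin m → Set V),
      (∀ i j, i ≠ j → Disjoint (P i) (P j)) ∧
      (⋃ i, P i) = Set.univ ∧
      (2 ≤ Nat.card V → m ≤ Nat.log 2 (Nat.card V)) ∧
      (Nat.card V = 1 → m ≤ 1) ∧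
      ∀ i, ∀ x ∈ P i,
        ({u | ∃ j, i ≤ j ∧ u ∈ P j} ∩ G.neighborSet x).ncard ≤ 4 * d := by
  classical
  cases nonempty_fintype V
  set R : ℕ → Set V := fun i => peel G (4 * d) i
  have hR : Antitone R := fun _ _ hij => Finset.coe_subset.mpr (peel_antitone hij)
  set m := max 1 (Nat.log 2 (Nat.card V))
  have hRm : peel G (4 * d) m = ∅ := by
    have hV : Nat.card V < 2 ^ (m + 1) :=
      (Nat.lt_pow_succ_log_self one_lt_two _).trans_le
        (Nat.pow_le_pow_right two_pos (by omega))
    exact peel_eq_empty h le_rfl (le_max_left _ _) hV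
  refine ⟨m, fun i => R i \ R (i + 1), fun i j hij => hR.pairwise_disjoint_sdiff_succ
      (Fin.val_injective.ne hij), ?_, fun hV => max_eq_right (Nat.log_pos one_lt_two hV) |>.le,
    fun hV => by simp only [m, hV, Nat.log_one_right, zero_le_one, max_eq_left, le_refl], ?_⟩
  · refine Set.eq_univ_of_forall fun x => ?_
    obtain ⟨i, hi, hx⟩ :=
      exists_lt_mem_sdiff_succ (R := R) (by simp [R, peel]) (show x ∉ R m by simp [R, hRm])
    exact Set.mem_iUnion.mpr ⟨⟨i, hi⟩, hx⟩
  · rintro i x ⟨hx, hx'⟩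
    calc ({u | ∃ j, i ≤ j ∧ u ∈ R j \ R (j + 1)} ∩ G.neighborSet x).ncard
        ≤ (R i ∩ G.neighborSet x).ncard := by
          refine Set.ncard_le_ncard (Set.inter_subset_inter_left _ ?_) (Set.toFinite _)
          rintro u ⟨j, hij, hu, -⟩
          exact hR hij hu
      _ = #{u ∈ peel G (4 * d) i | G.Adj x u} := ncard_inter_neighborSet _ _
      _ ≤ 4 * d := card_filter_adj_le_of_notMem_peel_succ hx hx'

/-- A `d`-degenerate graph on `n ≥ 1` vertices has a partition `T₁, …, T_m`
with `m ≤ log₂ n` (for `n ≥ 2`; `m ≤ 1` for `n = 1`) such that every vertex of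
`T_i` has degree at most `4d` in the subgraph induced on `T_i ∪ ⋯ ∪ T_m`. -/
theorem stmt6 [Finite V] (G : SimpleGraph V) (d : ℕ) (h : DegenerateLE G d)
    (hn : 1 ≤ Nat.card V) :
    ∃ (m : ℕ) (P : Fin m → Set V),
      (∀ i j, i ≠ j → Disjoint (P i) (P j)) ∧
      (⋃ i, P i) = Set.univ ∧
      (2 ≤ Nat.card V → m ≤ Nat.log 2 (Nat.card V)) ∧
      (Nat.card V = 1 → m ≤ 1) ∧
      ∀ i, ∀ x ∈ P i,
        ({u | ∃ j, i ≤ j ∧ u ∈ P j} ∩ G.neighborSet x).ncard ≤ 4 * d :=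
  stmt6_general G d h
end

section
/- Let Ω be a potential maximal clique of G and D a component of G \ Ω. Then N(D) is a minimal separator of G. (Assume the characterization: Ω is a PMC iff (1) every non-adjacent pair x,y ∈ Ω is covered by some component D of G\Ω with x,y ∈ N(D), and (2) N(D) ⊊ Ω for every component D of G\Ω.) -/
universe u v

variable {V : Type u}

private lemma walk_stays (G : SimpleGraph V) (D : Set V) :
    ∀ {u y : V} (p : G.Walk u y), (∀ x ∈ p.support, x ∉ nbhd G D) → u ∈ D → y ∈ D := by
  intro u y p
  induction p with
  | nil => intro _ hu; exact hu
  | @cons a b c h q ih =>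
    intro hp hu
    apply ih
    · intro x hx
      exact hp x (by simp [SimpleGraph.Walk.support_cons, hx])
    · by_contra hb
      exact hp b (by simp) ⟨hb, a, hu, h⟩

/-- If `Ω` satisfies the two defining conditions of a potential maximal clique,
then for every component `D` of `G \ Ω`, the set `N(D)` is a minimal
separator of `G`. -/
theorem stmt8 [Finite V] (G : SimpleGraph V) (Ω : Set V)
    (h1 : ∀ x ∈ Ω, ∀ y ∈ Ω, x ≠ y → ¬ G.Adj x y →
      ∃ D, IsCompOf G Ωᶜ D ∧ x ∈ nbhd G D ∧ y ∈ nbhd G D)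
    (h2 : ∀ D, IsCompOf G Ωᶜ D → nbhd G D ⊂ Ω) :
    ∀ D, IsCompOf G Ωᶜ D → IsMinimalSeparator G (nbhd G D) := by
  intro D hD
  obtain ⟨u, hu⟩ := hD.1
  have hsub := hD.2.1
  have hconn := hD.2.2.1
  have hXΩ : nbhd G D ⊆ Ω := (h2 D hD).subset
  obtain ⟨y, hyΩ, hyX⟩ := Set.exists_of_ssubset (h2 D hD)
  refine ⟨u, y, fun h => h.1 hu, hyX, ?_, ?_⟩
  · rintro ⟨p, hp⟩
    exact hsub (walk_stays G D p (fun x hx => hp x hx) hu) hyΩ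
  · intro Y hY
    obtain ⟨x, hxX, hxY⟩ := Set.exists_of_ssubset hY
    have hDY : ∀ z ∈ D, z ∉ Y := fun z hz hzY => (hsub hz) (hXΩ (hY.subset hzY))
    have hyY : y ∉ Y := fun h => hyX (hY.subset h)
    obtain ⟨hxD, u', hu'D, hadj⟩ := hxX
    obtain ⟨p1, hp1⟩ := hconn u hu u' hu'D
    by_cases hxy : G.Adj x y
    · refine ⟨p1.append (SimpleGraph.Walk.cons hadj (SimpleGraph.Walk.cons hxy SimpleGraph.Walk.nil)), ?_⟩
      intro z hz
      rw [SimpleGraph.Walk.mem_support_append_iff] at hz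
      rcases hz with hz | hz
      · exact hDY z (hp1 z hz)
      · simp only [SimpleGraph.Walk.support_cons, SimpleGraph.Walk.support_nil,
          List.mem_cons, List.mem_singleton] at hz
        rcases hz with rfl | rfl | rfl | h
        · exact hDY z (hp1 z (SimpleGraph.Walk.end_mem_support p1))
        · exact hxY
        · exact hyY
        · simp at h
    · have hxΩ : x ∈ Ω := hXΩ ⟨hxD, u', hu'D, hadj⟩
      have hxney : x ≠ y := fun h => hyX (h ▸ ⟨hxD, u', hu'D, hadj⟩)
      obtain ⟨D', hD', hxN, hyN⟩ := h1 x hxΩ y hyΩ hxney hxy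
      have hD'Y : ∀ z ∈ D', z ∉ Y := fun z hz hzY =>
        (hD'.2.1 hz) (hXΩ (hY.subset hzY))
      obtain ⟨_, a, haD', hax⟩ := hxN
      obtain ⟨_, b, hbD', hby⟩ := hyN
      obtain ⟨p2, hp2⟩ := hD'.2.2.1 a haD' b hbD'
      refine ⟨p1.append (SimpleGraph.Walk.cons hadj (SimpleGraph.Walk.cons hax.symm
        (p2.append (SimpleGraph.Walk.cons hby SimpleGraph.Walk.nil)))), ?_⟩
      intro z hz
      rw [SimpleGraph.Walk.mem_support_append_iff] at hz
      rcases hz with hz | hz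
      · exact hDY z (hp1 z hz)
      · simp only [SimpleGraph.Walk.support_cons, List.mem_cons] at hz
        rcases hz with rfl | rfl | hz
        · exact hDY z (hp1 z (SimpleGraph.Walk.end_mem_support p1))
        · exact hxY
        · rw [SimpleGraph.Walk.mem_support_append_iff] at hz
          rcases hz with hz | hz
          · exact hD'Y z (hp2 z hz)
          · simp only [SimpleGraph.Walk.support_cons, SimpleGraph.Walk.support_nil,
              List.mem_cons, List.mem_singleton] at hz
            rcases hz with rfl | rfl | h
            · exact hD'Y z (hp2 z (SimpleGraph.Walk.end_mem_support p2))
            · exact hyY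
            · simp at h
end

section
/- Let G be a (theta)-free graph and Ω a potential maximal clique of G. If Y ⊆ Ω is a stable set such that no vertex of Y is contained in any minimal separator N(D) (for components D of G\Ω) together with three or more vertices of Y (formally: for each component D of G\Ω, |N(D) ∩ Y| ≤ 2), then |Y| ≤ 3. -/
/-!
Four pairwise non-adjacent vertices `y₁, …, y₄` of `Ω` would give a theta with ends `y₁, y₂`.
Every non-edge `xy` of a potential maximal clique `Ω` is covered by a component of `G \ Ω`:
otherwise, with `A` the union of the components attached to `x`, the edges of the minimal
chordal completion `H` lying inside `(A ∪ Ω) \ {y}` or inside `Aᶜ \ {x}` form a chordal completion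
(two chordal graphs glued along a clique) that misses `xy`.
Let `D_ab` cover `y_a y_b`. Since `N(D_ab)` meets `Y` exactly in `{y_a, y_b}`, the components
`D₁₂, D₁₃, D₃₂, D₁₄, D₄₂` are pairwise distinct, hence pairwise anticomplete, and `y_c` has no
neighbour in `D_ab` for `c ∉ {a, b}`. Induced paths through `D₁₂`, through `D₁₃ ∪ {y₃} ∪ D₃₂`
and through `D₁₄ ∪ {y₄} ∪ D₄₂` then form a theta.
-/

universe u v

variable {V : Type u}

open SimpleGraph

section

variable {G : SimpleGraph V}

def Anticomplete (G : SimpleGraph V) (A B : Set V) : Prop :=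
  ∀ u ∈ A, ∀ w ∈ B, u ≠ w ∧ ¬ G.Adj u w

section Anticomplete

variable {A B C : Set V}

lemma Anticomplete.symm (h : Anticomplete G A B) : Anticomplete G B A :=
  fun w hw u hu => ⟨(h u hu w hw).1.symm, fun huw => (h u hu w hw).2 huw.symm⟩

@[simp]
lemma anticomplete_union_left :
    Anticomplete G (A ∪ B) C ↔ Anticomplete G A C ∧ Anticomplete G B C := by
  simp only [Anticomplete, Set.mem_union, or_imp, forall_and]
  tauto

@[simp]
lemma anticomplete_union_right :
    Anticomplete G A (B ∪ C) ↔ Anticomplete G A B ∧ Anticomplete G A C := by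
  simp only [Anticomplete, Set.mem_union, or_imp, forall_and]
  tauto

lemma anticomplete_singleton_singleton {a b : V} (hab : a ≠ b) (hnadj : ¬ G.Adj a b) :
    Anticomplete G {a} {b} := by
  simpa [Anticomplete] using ⟨hab, hnadj⟩

end Anticomplete

section Components

variable {S T D D' : Set V} {u w y z : V}

lemma ConnectedIn.refl (hu : u ∈ S) : ConnectedIn G S u u := ⟨.nil, by simpa⟩

lemma ConnectedIn.of_adj (h : G.Adj u w) (hu : u ∈ S) (hw : w ∈ S) : ConnectedIn G S u w :=
  ⟨h.toWalk, by simp [hu, hw]⟩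

lemma ConnectedIn.left_mem (h : ConnectedIn G S u w) : u ∈ S :=
  h.elim fun p hp => hp u p.start_mem_support

lemma ConnectedIn.symm (h : ConnectedIn G S u w) : ConnectedIn G S w u :=
  h.elim fun p hp => ⟨p.reverse, fun x hx => hp x (by simpa using hx)⟩

lemma ConnectedIn.trans (h₁ : ConnectedIn G S u w) (h₂ : ConnectedIn G S w z) :
    ConnectedIn G S u z := by
  obtain ⟨p, hp⟩ := h₁
  obtain ⟨q, hq⟩ := h₂
  refine ⟨p.append q, fun x hx => ?_⟩
  rcases Walk.mem_support_append_iff p q |>.1 hx with hx | hx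
  exacts [hp x hx, hq x hx]

lemma ConnectedIn.mono (h : ConnectedIn G S u w) (hST : S ⊆ T) : ConnectedIn G T u w :=
  h.elim fun p hp => ⟨p, fun x hx => hST (hp x hx)⟩

lemma ConnectedIn.of_mem_support (p : G.Walk u w) (hp : ∀ x ∈ p.support, x ∈ S)
    (hz : z ∈ p.support) : ConnectedIn G S u z := by
  classical
  exact ⟨p.takeUntil z hz, fun x hx => hp x (p.support_takeUntil_subset_support hz hx)⟩

lemma isCompOf_setOf_connectedIn (hu : u ∈ S) : IsCompOf G S {w | ConnectedIn G S u w} := by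
  refine ⟨⟨u, .refl hu⟩, fun w h => h.symm.left_mem, fun w₁ h₁ w₂ h₂ => ?_,
    fun w₁ h₁ w₂ h₂ h => h₁.trans (.of_adj h h₁.symm.left_mem h₂)⟩
  obtain ⟨p, hp⟩ := h₁.symm.trans h₂
  exact ⟨p, fun x hx => h₁.trans (.of_mem_support p hp hx)⟩

lemma IsCompOf.mem_of_connectedIn (hD : IsCompOf G S D) (hu : u ∈ D) (h : ConnectedIn G S u w) :
    w ∈ D := by
  obtain ⟨p, hp⟩ := h
  induction p with
  | nil => exact hu
  | cons hadj p ih =>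
    exact ih (hD.2.2.2 _ hu _ (hp _ (by simp)) hadj) fun x hx => hp x (by simp [hx])

lemma IsCompOf.eq_of_mem (hD : IsCompOf G S D) (hD' : IsCompOf G S D') (hz : z ∈ D)
    (hz' : z ∈ D') : D = D' := by
  have key {E E' : Set V} (hE : IsCompOf G S E) (hE' : IsCompOf G S E') (hz : z ∈ E)
      (hz' : z ∈ E') : E ⊆ E' := fun w hw =>
    hE'.mem_of_connectedIn hz' ((hE.2.2.1 z hz w hw).mono hE.2.1)
  exact (key hD hD' hz hz').antisymm (key hD' hD hz' hz)

lemma IsCompOf.anticomplete (hD : IsCompOf G S D) (hD' : IsCompOf G S D') (hne : D ≠ D') :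
    Anticomplete G D D' := fun u hu w hw =>
  ⟨fun h => hne (hD.eq_of_mem hD' hu (h ▸ hw)),
    fun h => hne (hD.eq_of_mem hD' (hD.2.2.2 u hu w (hD'.2.1 hw) h) hw)⟩

lemma IsCompOf.anticomplete_of_mem_nbhd (hD : IsCompOf G S D) (hD' : IsCompOf G S D')
    (hy : y ∈ nbhd G D) (hy' : y ∉ nbhd G D') : Anticomplete G D D' :=
  hD.anticomplete hD' fun h => hy' (h ▸ hy)

lemma IsCompOf.anticomplete_singleton (hD : IsCompOf G S D) (hyS : y ∉ S) (hy : y ∉ nbhd G D) :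
    Anticomplete G {y} D := by
  have hyD : y ∉ D := fun h => hyS (hD.2.1 h)
  rintro _ rfl u hu
  exact ⟨fun h => hyD (h ▸ hu), fun h => hy ⟨hyD, u, hu, h.symm⟩⟩

lemma IsCompOf.anticomplete_union_singleton_union {D₁ D₂ : Set V} (hD₁ : IsCompOf G S D₁)
    (hD₂ : IsCompOf G S D₂) (hD : IsCompOf G S D) (hyS : y ∉ S) (h₁ : y ∈ nbhd G D₁)
    (h₂ : y ∈ nbhd G D₂) (hy : y ∉ nbhd G D) : Anticomplete G (D₁ ∪ {y} ∪ D₂) D := by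
  simp only [anticomplete_union_left]
  exact ⟨⟨hD₁.anticomplete_of_mem_nbhd hD h₁ hy, hD.anticomplete_singleton hyS hy⟩,
    hD₂.anticomplete_of_mem_nbhd hD h₂ hy⟩

end Components

section InducedPaths

variable {a b c : V}

lemma exists_isInducedPathW_of_walk {S : Set V} (hab : a ≠ b) (hnadj : ¬ G.Adj a b)
    (p : G.Walk a b) (hp : ∀ z ∈ p.support, z ∈ S) :
    ∃ q : G.Walk a b, IsInducedPathW G q ∧ 2 ≤ q.length ∧ ∀ z ∈ q.support, z ∈ S := by
  classical
  obtain ⟨q, hqS, hmin⟩ := (measure fun q : G.Walk a b => q.length).wf.has_min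
    {q | ∀ z ∈ q.support, z ∈ S} ⟨p, hp⟩
  replace hmin : ∀ r : G.Walk a b, (∀ z ∈ r.support, z ∈ S) → q.length ≤ r.length :=
    fun r hr => not_lt.1 (hmin r hr)
  have hbS : ∀ z ∈ q.bypass.support, z ∈ S := fun z hz => hqS z (q.support_bypass_subset_support hz)
  have hlen : q.bypass.length = q.length :=
    (q.length_bypass_le_length).antisymm (hmin _ hbS)
  set r := q.bypass
  -- a chord of `r` would give a shorter walk inside `S`
  have hchord : ∀ i j, i + 2 ≤ j → j ≤ r.length → ¬ G.Adj (r.getVert i) (r.getVert j) := by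
    intro i j hij hj hadj
    have hS : ∀ z ∈ ((r.take i).append (.cons hadj (r.drop j))).support, z ∈ S := by
      intro z hz
      simp only [Walk.mem_support_append_iff, Walk.support_cons, List.mem_cons,
        Walk.support_take, Walk.drop_support_eq_support_drop_min] at hz
      rcases hz with hz | rfl | hz
      exacts [hbS z (List.mem_of_mem_take hz), hbS _ (r.getVert_mem_support i),
        hbS z (List.mem_of_mem_drop hz)]
    have := hmin _ hS
    simp only [Walk.length_append, Walk.length_cons, Walk.take_length, Walk.drop_length] at this
    omega
  refine ⟨r, ⟨q.bypass_isPath, hchord⟩, ?_, hbS⟩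
  by_contra! hshort
  interval_cases h : r.length
  · exact hab (Walk.eq_of_length_eq_zero h)
  · exact hnadj (Walk.adj_of_length_eq_one h)

lemma IsInducedPathW.append {P : G.Walk a c} {Q : G.Walk c b} (hP : IsInducedPathW G P)
    (hQ : IsInducedPathW G Q)
    (hPQ : ∀ u ∈ P.support, ∀ w ∈ Q.support, u ≠ c → w ≠ c → u ≠ w ∧ ¬ G.Adj u w) :
    IsInducedPathW G (P.append Q) := by
  obtain ⟨hPp, hPc⟩ := hP
  obtain ⟨hQp, hQc⟩ := hQ
  refine ⟨?_, fun i j hij hj hadj => ?_⟩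
  · rw [Walk.isPath_def, Walk.support_append, List.nodup_append]
    have hQn := hQp.support_nodup
    rw [← Q.cons_tail_support, List.nodup_cons] at hQn
    refine ⟨hPp.support_nodup, hQn.2, fun z hzP w hzQ hzw => ?_⟩
    subst hzw
    by_cases hzc : z = c
    · exact hQn.1 (hzc ▸ hzQ)
    · exact (hPQ z hzP z (List.mem_of_mem_tail hzQ) hzc hzc).1 rfl
  rw [Walk.length_append] at hj
  rw [Walk.getVert_append, Walk.getVert_append'] at hadj
  split_ifs at hadj with hi hj'
  · exact hPc i j hij hj' hadj
  · refine (hPQ _ (P.getVert_mem_support i) _ (Q.getVert_mem_support _) ?_ ?_).2 hadj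
    · rw [Ne, hPp.getVert_eq_end_iff hi.le]
      omega
    · rw [Ne, hQp.getVert_eq_start_iff (by omega)]
      omega
  · omega
  · exact hQc (i - P.length) (j - P.length) (by omega) (by omega) hadj

end InducedPaths

def IsInducedPathVia (G : SimpleGraph V) {a b : V} (P : G.Walk a b) (I : Set V) : Prop :=
  IsInducedPathW G P ∧ 2 ≤ P.length ∧ ∀ z ∈ P.support, z ∈ I ∪ {a, b}

section InducedPathVia

variable {a b c : V} {A B : Set V}

lemma IsInducedPathVia.mem_of_ne {P : G.Walk a b} (hP : IsInducedPathVia G P A) {z : V}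
    (hz : z ∈ P.support) (hza : z ≠ a) (hzb : z ≠ b) : z ∈ A := by
  simpa [hza, hzb] using hP.2.2 z hz

lemma IsInducedPathVia.append {P : G.Walk a c} {Q : G.Walk c b} (hP : IsInducedPathVia G P A)
    (hQ : IsInducedPathVia G Q B) (hAB : Anticomplete G (A ∪ {a}) (B ∪ {b})) :
    IsInducedPathVia G (P.append Q) (A ∪ {c} ∪ B) := by
  refine ⟨hP.1.append hQ.1 fun u hu w hw huc hwc => hAB u ?_ w ?_, ?_, fun z hz => ?_⟩
  · by_cases hua : u = a
    · exact Or.inr hua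
    · exact Or.inl (hP.mem_of_ne hu hua huc)
  · by_cases hwb : w = b
    · exact Or.inr hwb
    · exact Or.inl (hQ.mem_of_ne hw hwc hwb)
  · exact Walk.length_append P Q ▸ le_add_right hP.2.1
  · rcases Walk.mem_support_append_iff P Q |>.1 hz with hz | hz
    · have := hP.2.2 z hz
      simp only [Set.mem_union, Set.mem_insert_iff, Set.mem_singleton_iff] at this ⊢
      tauto
    · have := hQ.2.2 z hz
      simp only [Set.mem_union, Set.mem_insert_iff, Set.mem_singleton_iff] at this ⊢
      tauto

lemma IsInducedPathVia.intDisjAnticomplete {P Q : G.Walk a b} (hP : IsInducedPathVia G P A)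
    (hQ : IsInducedPathVia G Q B) (hAB : Anticomplete G A B) : IntDisjAnticomplete G P Q :=
  fun u hu w hw hua hub hwa hwb => hAB u (hP.mem_of_ne hu hua hub) w (hQ.mem_of_ne hw hwa hwb)

lemma hasTheta_of_isInducedPathVia (hab : ¬ G.Adj a b) {P₁ P₂ P₃ : G.Walk a b}
    {I₁ I₂ I₃ : Set V} (h₁ : IsInducedPathVia G P₁ I₁) (h₂ : IsInducedPathVia G P₂ I₂)
    (h₃ : IsInducedPathVia G P₃ I₃) (h₁₂ : Anticomplete G I₁ I₂) (h₁₃ : Anticomplete G I₁ I₃)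
    (h₂₃ : Anticomplete G I₂ I₃) : HasTheta G :=
  ⟨a, b, P₁, P₂, P₃, hab, h₁.1, h₁.2.1, h₂.1, h₂.2.1, h₃.1, h₃.2.1,
    h₁.intDisjAnticomplete h₂ h₁₂, h₁.intDisjAnticomplete h₃ h₁₃, h₂.intDisjAnticomplete h₃ h₂₃⟩

lemma IsCompOf.exists_isInducedPathVia {S D : Set V} (hD : IsCompOf G S D) (ha : a ∈ nbhd G D)
    (hb : b ∈ nbhd G D) (hab : a ≠ b) (hnadj : ¬ G.Adj a b) :
    ∃ P : G.Walk a b, IsInducedPathVia G P D := by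
  obtain ⟨-, u, hu, hua⟩ := ha
  obtain ⟨-, w, hw, hwb⟩ := hb
  obtain ⟨p, hp⟩ := hD.2.2.1 u hu w hw
  obtain ⟨q, hq, hlen, hqS⟩ := exists_isInducedPathW_of_walk (S := D ∪ {a, b}) hab hnadj
    (.cons hua.symm (p.concat hwb)) (by simp +contextual [Walk.support_concat, or_imp, hp])
  exact ⟨q, hq, hlen, hqS⟩

end InducedPathVia

section Chordal

variable {H : SimpleGraph V} {L R : Set V}

lemma isChordal_iff_fin_succ : IsChordal G ↔
    ∀ m : ℕ, 3 ≤ m → ∀ f : Fin (m + 1) → V, Function.Injective f →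
      ¬ ∀ i j, G.Adj (f i) (f j) ↔ (j = i + 1 ∨ i = j + 1) := by
  have succ_iff {m : ℕ} (i j : Fin (m + 1)) : (i.val + 1) % (m + 1) = j.val ↔ j = i + 1 := by
    rw [Fin.ext_iff, Fin.val_add]
    simp [eq_comm]
  constructor
  · rintro h m hm f hf hcyc
    exact h (m + 1) (by omega) ⟨f, hf, fun i j => by rw [hcyc, succ_iff, succ_iff]⟩
  · rintro h n hn ⟨f, hf, hcyc⟩
    obtain ⟨m, rfl⟩ : ∃ m, n = m + 1 := ⟨n - 1, by omega⟩
    exact h m (by omega) f hf fun i j => by rw [hcyc, succ_iff, succ_iff]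

lemma Fin.not_consecutive {m : ℕ} {a b : Fin (m + 1)} (ha : a ≠ 0) (hab : a.val + 1 < b.val) :
    ¬ (b = a + 1 ∨ a = b + 1) := by
  have ha' : a ≠ Fin.last m := by
    rintro rfl
    have := b.isLt
    rw [Fin.val_last] at hab
    omega
  have ha0 : 0 < a.val := Fin.pos_iff_ne_zero.2 ha
  rintro (h | h) <;> apply_fun Fin.val at h <;> rw [Fin.val_add_one] at h <;>
    split_ifs at h <;> omega

namespace SimpleGraph

def restrictSides (H : SimpleGraph V) (L R : Set V) : SimpleGraph V where
  Adj u w := H.Adj u w ∧ (u ∈ L ∧ w ∈ L ∨ u ∈ R ∧ w ∈ R)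
  symm := ⟨fun _ _ h => ⟨h.1.symm, h.2.imp And.symm And.symm⟩⟩
  loopless := ⟨fun u h => H.loopless.irrefl u h.1⟩

lemma restrictSides_le : H.restrictSides L R ≤ H := fun _ _ h => h.1

lemma mem_left_of_restrictSides_adj {u w : V} (h : (H.restrictSides L R).Adj u w) (hu : u ∉ R) :
    w ∈ L := by
  rcases h.2 with h | h
  · exact h.2
  · exact absurd h.1 hu

lemma not_restrictSides_adj {u w : V} (hu : u ∉ R) (hw : w ∉ L) :
    ¬ (H.restrictSides L R).Adj u w :=
  fun h => hw (mem_left_of_restrictSides_adj h hu)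

lemma le_restrictSides (hGH : G ≤ H) (hLR : ∀ v, v ∈ L ∨ v ∈ R)
    (hsep : ∀ u, u ∉ R → ∀ w, w ∉ L → ¬ G.Adj u w) : G ≤ H.restrictSides L R := by
  intro u w h
  refine ⟨hGH h, ?_⟩
  by_cases huR : u ∈ R
  · by_cases hwR : w ∈ R
    · exact Or.inr ⟨huR, hwR⟩
    · exact Or.inl ⟨by_contra fun huL => hsep w hwR u huL h.symm, (hLR w).resolve_right hwR⟩
  · exact Or.inl ⟨(hLR u).resolve_right huR, by_contra fun hwL => hsep u huR w hwL h⟩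

end SimpleGraph

/-- With `a` and `b` the first and last positions of the cycle in `R`, their outer neighbours lie
in `L \ R`, so `f a, f b ∈ L ∩ R` are adjacent although `j` separates them on both sides. -/
lemma not_isCycle_restrictSides (hLR : ∀ v, v ∈ L ∨ v ∈ R) (hK : H.IsClique (L ∩ R))
    {m : ℕ} {f : Fin (m + 1) → V} (hf : Function.Injective f)
    (hcyc : ∀ i j, (H.restrictSides L R).Adj (f i) (f j) ↔ (j = i + 1 ∨ i = j + 1))
    (h0 : f 0 ∉ R) {j : Fin (m + 1)} (hj : f j ∉ L) : False := by
  classical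
  set T := Finset.univ.filter fun k => f k ∈ R
  have hjT : j ∈ T := by simpa [T] using (hLR (f j)).resolve_left hj
  set a := T.min' ⟨j, hjT⟩
  set b := T.max' ⟨j, hjT⟩
  have haR : f a ∈ R := (Finset.mem_filter.1 (T.min'_mem _)).2
  have hbR : f b ∈ R := (Finset.mem_filter.1 (T.max'_mem _)).2
  have ha0 : a ≠ 0 := fun h => h0 (h ▸ haR)
  have hpred : f (a - 1) ∉ R := fun h => by
    have hle : a ≤ a - 1 := T.min'_le _ (by simp [T, h])
    rw [Fin.le_iff_val_le_val, Fin.val_sub_one_of_ne_zero ha0] at hle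
    have := Fin.pos_iff_ne_zero.2 ha0
    omega
  have hsucc : f (b + 1) ∉ R := fun h => by
    by_cases hb : b = Fin.last m
    · exact h0 (by simpa [hb] using h)
    · have hle : b + 1 ≤ b := T.le_max' _ (by simp [T, h])
      rw [Fin.le_iff_val_le_val, Fin.val_add_one, if_neg hb] at hle
      omega
  have haL : f a ∈ L :=
    mem_left_of_restrictSides_adj ((hcyc _ _).2 (Or.inl (sub_add_cancel a 1).symm)) hpred
  have hbL : f b ∈ L := mem_left_of_restrictSides_adj ((hcyc _ _).2 (Or.inr rfl)) hsucc
  have hab : a.val + 1 < b.val := by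
    have haj : a.val < j.val := lt_of_le_of_ne (T.min'_le j hjT) fun h => hj (Fin.ext h ▸ haL)
    have hjb : j.val < b.val := lt_of_le_of_ne (T.le_max' j hjT) fun h => hj (Fin.ext h ▸ hbL)
    omega
  refine Fin.not_consecutive ha0 hab ((hcyc a b).1 ⟨hK ⟨haL, haR⟩ ⟨hbL, hbR⟩ ?_, Or.inl ⟨haL, hbL⟩⟩)
  exact hf.ne (Fin.ne_of_lt (by omega))

lemma IsChordal.restrictSides (hH : IsChordal H) (hLR : ∀ v, v ∈ L ∨ v ∈ R)
    (hK : H.IsClique (L ∩ R)) : IsChordal (H.restrictSides L R) := by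
  rw [isChordal_iff_fin_succ] at hH ⊢
  intro m hm f hf hcyc
  by_cases hside : (∀ i, f i ∈ L) ∨ (∀ i, f i ∈ R)
  · refine hH m hm f hf fun i j => ?_
    rw [← hcyc]
    exact ⟨fun h => ⟨h, hside.imp (fun h => ⟨h i, h j⟩) (fun h => ⟨h i, h j⟩)⟩, And.left⟩
  push Not at hside
  obtain ⟨⟨i, hi⟩, ⟨j, hj⟩⟩ := hside
  refine not_isCycle_restrictSides hLR hK (f := fun k => f (k + j))
    (fun _ _ h => add_right_cancel (hf h)) (fun k l => ?_) (by simpa using hj) (j := i - j)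
    (by simpa using hi)
  rw [hcyc, add_right_comm, add_right_comm l, add_left_inj, add_left_inj]

end Chordal

lemma exists_separation_of_forall_not_mem_nbhd {Ω : Set V} {x y : V} (hx : x ∈ Ω)
    (hy : y ∈ Ω) (hnadj : ¬ G.Adj x y)
    (hno : ∀ D, IsCompOf G Ωᶜ D → x ∈ nbhd G D → y ∉ nbhd G D) :
    ∃ A : Set V, A ⊆ Ωᶜ ∧ ∀ u, u ∈ A ∨ u = x → ∀ w, w ∉ A ∪ Ω ∨ w = y → ¬ G.Adj u w := by
  refine ⟨{u | ∃ w, ConnectedIn G Ωᶜ u w ∧ G.Adj w x}, fun u ⟨_, h, _⟩ => h.left_mem, ?_⟩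
  rintro u (⟨v, h, hv⟩ | rfl) w hw huw
  · rcases hw with hw | rfl
    · have hwΩ : w ∈ Ωᶜ := fun h => hw (.inr h)
      exact hw (.inl ⟨v, (ConnectedIn.of_adj huw.symm hwΩ h.left_mem).trans h, hv⟩)
    · exact hno _ (isCompOf_setOf_connectedIn h.left_mem)
        ⟨fun hxC => hxC.symm.left_mem hx, v, h, hv⟩
        ⟨fun hyC => hyC.symm.left_mem hy, u, .refl h.left_mem, huw⟩
  · rcases hw with hw | rfl
    · exact hw (.inl ⟨w, .refl fun h => hw (.inr h), huw.symm⟩)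
    · exact hnadj huw

lemma IsMinimalChordalCompletion.exists_isCompOf_mem_nbhd {H : SimpleGraph V}
    (hH : IsMinimalChordalCompletion G H) {Ω : Set V} (hΩ : H.IsClique Ω) {x y : V}
    (hx : x ∈ Ω) (hy : y ∈ Ω) (hxy : x ≠ y) (hnadj : ¬ G.Adj x y) :
    ∃ D, IsCompOf G Ωᶜ D ∧ x ∈ nbhd G D ∧ y ∈ nbhd G D := by
  obtain ⟨hGH, hchordal, hmin⟩ := hH
  by_contra! hno
  obtain ⟨A, hAΩ, hsep⟩ := exists_separation_of_forall_not_mem_nbhd hx hy hnadj hno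
  -- keeping only the edges of `H` inside `L` or inside `R` loses `xy` but no edge of `G`
  set L := (A ∪ Ω) \ {y}
  set R := Aᶜ \ {x}
  have hLR : ∀ v, v ∈ L ∨ v ∈ R := by
    intro v
    by_cases hvA : v ∈ A
    · exact Or.inl ⟨Or.inl hvA, fun h => hAΩ hvA (h ▸ hy)⟩
    by_cases hvx : v = x
    · exact Or.inl ⟨Or.inr (hvx ▸ hx), fun h => hxy (hvx.symm.trans h)⟩
    · exact Or.inr ⟨hvA, hvx⟩
  have hK : H.IsClique (L ∩ R) :=
    hΩ.subset fun v ⟨⟨hv, _⟩, hvA, _⟩ => hv.resolve_left hvA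
  have hsep' : ∀ u, u ∉ R → ∀ w, w ∉ L → ¬ G.Adj u w := fun u hu w hw =>
    hsep u (by simpa [R, or_iff_not_imp_left] using hu) w
      (by simpa [L, or_iff_not_imp_left] using hw)
  have hH' := hmin _ (le_restrictSides hGH hLR hsep') restrictSides_le
    (hchordal.restrictSides hLR hK)
  exact not_restrictSides_adj (L := L) (R := R) (fun h => h.2 rfl) (fun h => h.2 rfl)
    (hH' ▸ hΩ hx hy hxy)

lemma IsPMC.exists_isCompOf_mem_nbhd {Ω : Set V} (hΩ : IsPMC G Ω) {x y : V} (hx : x ∈ Ω)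
    (hy : y ∈ Ω) (hxy : x ≠ y) (hnadj : ¬ G.Adj x y) :
    ∃ D, IsCompOf G Ωᶜ D ∧ x ∈ nbhd G D ∧ y ∈ nbhd G D :=
  let ⟨_, hH, hΩH, _⟩ := hΩ
  hH.exists_isCompOf_mem_nbhd hΩH hx hy hxy hnadj


section Theta

variable [Finite V] {Ω Y : Set V} {a b c : V}

lemma IsPMC.exists_isInducedPathVia (hΩ : IsPMC G Ω) (hYΩ : Y ⊆ Ω) (hst : StableSet G Y)
    (hcov : ∀ D, IsCompOf G Ωᶜ D → (nbhd G D ∩ Y).ncard ≤ 2) (ha : a ∈ Y) (hb : b ∈ Y)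
    (hab : a ≠ b) : ∃ D, ∃ P : G.Walk a b, IsCompOf G Ωᶜ D ∧
      (∀ y ∈ Y, y ∈ nbhd G D ↔ y = a ∨ y = b) ∧ IsInducedPathVia G P D := by
  obtain ⟨D, hD, haD, hbD⟩ := hΩ.exists_isCompOf_mem_nbhd (hYΩ ha) (hYΩ hb) hab (hst a ha b hb)
  obtain ⟨P, hP⟩ := hD.exists_isInducedPathVia haD hbD hab (hst a ha b hb)
  have hN : {a, b} = nbhd G D ∩ Y := Set.eq_of_subset_of_ncard_le
    (Set.insert_subset ⟨haD, ha⟩ (Set.singleton_subset_iff.2 ⟨hbD, hb⟩))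
    ((Set.ncard_pair hab).symm ▸ hcov D hD)
  refine ⟨D, P, hD, fun y hy => ?_, hP⟩
  simpa [hy] using (Set.ext_iff.1 hN y).symm

lemma IsPMC.exists_isInducedPathVia_through (hΩ : IsPMC G Ω) (hYΩ : Y ⊆ Ω)
    (hst : StableSet G Y) (hcov : ∀ D, IsCompOf G Ωᶜ D → (nbhd G D ∩ Y).ncard ≤ 2)
    (ha : a ∈ Y) (hb : b ∈ Y) (hc : c ∈ Y) (hab : a ≠ b) (hac : a ≠ c) (hbc : b ≠ c) :
    ∃ D D', ∃ P : G.Walk a b, IsCompOf G Ωᶜ D ∧ IsCompOf G Ωᶜ D' ∧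
      (∀ y ∈ Y, y ∈ nbhd G D ↔ y = a ∨ y = c) ∧ (∀ y ∈ Y, y ∈ nbhd G D' ↔ y = c ∨ y = b) ∧
      IsInducedPathVia G P (D ∪ {c} ∪ D') := by
  obtain ⟨D, P, hD, hN, hP⟩ := hΩ.exists_isInducedPathVia hYΩ hst hcov ha hc hac
  obtain ⟨D', Q, hD', hN', hQ⟩ := hΩ.exists_isInducedPathVia hYΩ hst hcov hc hb hbc.symm
  refine ⟨D, D', P.append Q, hD, hD', hN, hN', hP.append hQ ?_⟩
  have haD' : a ∉ nbhd G D' := by simp [hN' a ha, hac, hab]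
  have hbD : b ∉ nbhd G D := by simp [hN b hb, hab.symm, hbc]
  simp only [anticomplete_union_left, anticomplete_union_right]
  refine ⟨⟨hD.anticomplete_of_mem_nbhd hD' ((hN a ha).2 (.inl rfl)) haD',
    hD'.anticomplete_singleton (· (hYΩ ha)) haD'⟩,
    (hD.anticomplete_singleton (· (hYΩ hb)) hbD).symm, ?_⟩
  exact anticomplete_singleton_singleton hab (hst a ha b hb)

lemma IsPMC.hasTheta_of_four (hΩ : IsPMC G Ω) (hYΩ : Y ⊆ Ω)
    (hst : StableSet G Y) (hcov : ∀ D, IsCompOf G Ωᶜ D → (nbhd G D ∩ Y).ncard ≤ 2)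
    {y₁ y₂ y₃ y₄ : V} (h₁ : y₁ ∈ Y) (h₂ : y₂ ∈ Y) (h₃ : y₃ ∈ Y) (h₄ : y₄ ∈ Y)
    (h₁₂ : y₁ ≠ y₂) (h₁₃ : y₁ ≠ y₃) (h₁₄ : y₁ ≠ y₄) (h₂₃ : y₂ ≠ y₃) (h₂₄ : y₂ ≠ y₄)
    (h₃₄ : y₃ ≠ y₄) : HasTheta G := by
  obtain ⟨D, P₁, hD, hN, hP₁⟩ := hΩ.exists_isInducedPathVia hYΩ hst hcov h₁ h₂ h₁₂
  obtain ⟨D₁₃, D₃₂, P₂, hD₁₃, hD₃₂, hN₁₃, hN₃₂, hP₂⟩ :=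
    hΩ.exists_isInducedPathVia_through hYΩ hst hcov h₁ h₂ h₃ h₁₂ h₁₃ h₂₃
  obtain ⟨D₁₄, D₄₂, P₃, hD₁₄, hD₄₂, hN₁₄, hN₄₂, hP₃⟩ :=
    hΩ.exists_isInducedPathVia_through hYΩ hst hcov h₁ h₂ h₄ h₁₂ h₁₄ h₂₄
  have hy₃ : y₃ ∉ Ωᶜ := (· (hYΩ h₃))
  have hy₄ : y₄ ∉ Ωᶜ := (· (hYΩ h₄))
  -- the interior of `P₂` sees `y₃` and that of `P₃` sees `y₄`; nothing else does
  have hI₃ {D' : Set V} (hD' : IsCompOf G Ωᶜ D') (hy : y₄ ∉ nbhd G D') :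
      Anticomplete G D' (D₁₄ ∪ {y₄} ∪ D₄₂) :=
    (hD₁₄.anticomplete_union_singleton_union hD₄₂ hD' hy₄ ((hN₁₄ _ h₄).2 (.inr rfl))
      ((hN₄₂ _ h₄).2 (.inl rfl)) hy).symm
  refine hasTheta_of_isInducedPathVia (hst _ h₁ _ h₂) hP₁ hP₂ hP₃
    (hD₁₃.anticomplete_union_singleton_union hD₃₂ hD hy₃ ((hN₁₃ _ h₃).2 (.inr rfl))
      ((hN₃₂ _ h₃).2 (.inl rfl)) (by simp [hN _ h₃, h₁₃.symm, h₂₃.symm])).symm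
    (hI₃ hD (by simp [hN _ h₄, h₁₄.symm, h₂₄.symm])) ?_
  simp only [anticomplete_union_left]
  refine ⟨⟨hI₃ hD₁₃ (by simp [hN₁₃ _ h₄, h₁₄.symm, h₃₄.symm]), ?_⟩,
    hI₃ hD₃₂ (by simp [hN₃₂ _ h₄, h₃₄.symm, h₂₄.symm])⟩
  simp only [anticomplete_union_right]
  exact ⟨⟨hD₁₄.anticomplete_singleton hy₃ (by simp [hN₁₄ _ h₃, h₁₃.symm, h₃₄]),
    anticomplete_singleton_singleton h₃₄ (hst _ h₃ _ h₄)⟩,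
    hD₄₂.anticomplete_singleton hy₃ (by simp [hN₄₂ _ h₃, h₃₄, h₂₃.symm])⟩

end Theta

end

/-- In a theta-free graph, a stable subset `Y` of a potential maximal clique
`Ω` meeting each minimal separator `N(D)` (for components `D` of `G \ Ω`) in
at most two vertices has size at most 3. -/
theorem stmt10 [Finite V] (G : SimpleGraph V) (hfree : ¬ HasTheta G)
    (Ω : Set V) (hΩ : IsPMC G Ω) (Y : Set V) (hYΩ : Y ⊆ Ω)
    (hst : StableSet G Y)
    (hcov : ∀ D, IsCompOf G Ωᶜ D → (nbhd G D ∩ Y).ncard ≤ 2) :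
    Y.ncard ≤ 3 := by
  by_contra! hY
  obtain ⟨y₄, h₄⟩ := Set.nonempty_of_ncard_ne_zero (by omega : Y.ncard ≠ 0)
  have hY' : 2 < (Y \ {y₄}).ncard := by
    rw [Set.ncard_sdiff_singleton_of_mem h₄]
    omega
  obtain ⟨y₁, y₂, y₃, ⟨h₁, h₁₄⟩, ⟨h₂, h₂₄⟩, ⟨h₃, h₃₄⟩, h₁₂, h₁₃, h₂₃⟩ :=
    (Set.two_lt_ncard_iff (Set.toFinite _)).1 hY'
  exact hfree (hΩ.hasTheta_of_four hYΩ hst hcov h₁ h₂ h₃ h₄ h₁₂ h₁₃ h₁₄ h₂₃ h₂₄ h₃₄)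
end

section
/- Let G be an n-vertex graph and let u, v be unbalanced vertices with v ∈ A(u) (where (A(u),C(u),B(u)) is the canonical star separation of u). Then B(u) ⊆ B(v), C(u)\{u} ⊆ C(v) ∪ B(v), and A(v) ∪ {v} ⊆ A(u) ∪ {u}. -/
universe u v

variable {V : Type u}

lemma comp_closed_walk (G : SimpleGraph V) {S D : Set V}
    (hcl : ∀ a ∈ D, ∀ b ∈ S, G.Adj a b → b ∈ D)
    {a b : V} (p : G.Walk a b) (hs : ∀ x ∈ p.support, x ∈ S) (ha : a ∈ D) :
    b ∈ D := by
  induction p with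
  | nil => exact ha
  | cons h q ih =>
    exact ih (fun x hx => hs x (by simp [SimpleGraph.Walk.support_cons, hx]))
      (hcl _ ha _ (hs _ (by simp [SimpleGraph.Walk.support_cons])) h)

/-- If `u, v` are unbalanced and `v ∈ A(u)`, then `B(u) ⊆ B(v)`,
`C(u)\{u} ⊆ C(v) ∪ B(v)`, and `A(v) ∪ {v} ⊆ A(u) ∪ {u}`. -/
theorem stmt11 [Finite V] (G : SimpleGraph V) (B : V → Set V) (u v : V)
    (hu : IsBigComp G u (B u)) (hv : IsBigComp G v (B v))
    (hvA : v ∈ Aside G B u) :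
    B u ⊆ B v ∧ Cside G B u \ {u} ⊆ Cside G B v ∪ B v ∧
      Aside G B v ∪ {v} ⊆ Aside G B u ∪ {u} := by
  obtain ⟨⟨huNe, huSub, huConn, huCl⟩, huCard⟩ := hu
  obtain ⟨⟨hvNe, hvSub, hvConn, hvCl⟩, hvCard⟩ := hv
  have hvnB : v ∉ B u := fun h => hvA (Or.inl h)
  have hvnC : v ∉ Cside G B u := fun h => hvA (Or.inr h)
  -- B u avoids the closed neighborhood of v
  have hBuS : B u ⊆ (insert v (G.neighborSet v))ᶜ := by
    intro x hx hmem
    rcases Set.mem_insert_iff.mp hmem with h | h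
    · exact hvnB (h ▸ hx)
    · exact hvnC (Set.mem_insert_of_mem _ ⟨hvnB, x, hx, (SimpleGraph.mem_neighborSet G v x).mp h |>.symm⟩)
  -- B u and B v intersect
  obtain ⟨x0, hx0u, hx0v⟩ : (B u ∩ B v).Nonempty := by
    by_contra hdis
    have hd : Disjoint (B u) (B v) := Set.disjoint_iff_inter_eq_empty.mpr
      (Set.not_nonempty_iff_eq_empty.mp hdis)
    have hunion : (B u ∪ B v).ncard = (B u).ncard + (B v).ncard :=
      Set.ncard_union_eq hd (Set.toFinite _) (Set.toFinite _)
    have hle : (B u ∪ B v).ncard ≤ Nat.card V := by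
      rw [← Set.ncard_univ]
      exact Set.ncard_le_ncard (Set.subset_univ _) (Set.toFinite _)
    omega
  have hBuBv : B u ⊆ B v := by
    intro y hy
    obtain ⟨p, hp⟩ := huConn x0 hx0u y hy
    exact comp_closed_walk G hvCl p (fun x hx => hBuS (hp x hx)) hx0v
  refine ⟨hBuBv, ?_, ?_⟩
  · rintro w ⟨hwC, hwne⟩
    have hwnu : w ≠ u := hwne
    rcases Set.mem_insert_iff.mp hwC with h | h
    · exact absurd h hwnu
    · obtain ⟨hwnB, x, hx, hadj⟩ := h
      by_cases hwBv : w ∈ B v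
      · exact Or.inr hwBv
      · exact Or.inl (Set.mem_insert_of_mem _ ⟨hwBv, x, hBuBv hx, hadj⟩)
  · rintro z (hz | hz)
    · -- z ∈ Aside G B v
      have hznBv : z ∉ B v := fun h => hz (Or.inl h)
      have hznCv : z ∉ Cside G B v := fun h => hz (Or.inr h)
      by_cases hzu : z = u
      · exact Or.inr hzu
      · refine Or.inl ?_
        intro hmem
        rcases hmem with h | h
        · exact hznBv (hBuBv h)
        · rcases Set.mem_insert_iff.mp h with h' | h'
          · exact hzu h'
          · obtain ⟨hznB, x, hx, hadj⟩ := h'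
            exact hznCv (Set.mem_insert_of_mem _ ⟨hznBv, x, hBuBv hx, hadj⟩)
    · exact Or.inl (hz ▸ hvA)
end

section
/- Let S be a stable set of unbalanced vertices of a graph G, with a fixed total order O on S. Define x ≤_A y iff x = y, or (x and y are star twins and O(x) < O(y)), or (x and y are not star twins and y ∈ A(x)). Then ≤_A is a partial order on S. -/
universe u v

variable {V : Type u}

-- auxiliary lemmas

lemma twins_symm {G : SimpleGraph V} {B : V → Set V} {x y : V}
    (h : StarTwins G B x y) : StarTwins G B y x :=
  ⟨h.1.symm, h.2.1.symm, h.2.2.symm⟩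

lemma twins_trans {G : SimpleGraph V} {B : V → Set V} {x y z : V}
    (h : StarTwins G B x y) (h' : StarTwins G B y z) : StarTwins G B x z :=
  ⟨h.1.trans h'.1, h.2.1.trans h'.2.1, h.2.2.trans h'.2.2⟩

lemma x_notin_A {G : SimpleGraph V} {B : V → Set V} {x : V} :
    x ∉ Aside G B x := by
  intro h
  exact h (Or.inr (Or.inl rfl))

lemma big_inter [Finite V] {D₁ D₂ : Set V}
    (h₁ : Nat.card V < 2 * D₁.ncard) (h₂ : Nat.card V < 2 * D₂.ncard) :
    (D₁ ∩ D₂).Nonempty := by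
  rw [Set.nonempty_iff_ne_empty]
  intro he
  have hu : (D₁ ∪ D₂).ncard ≤ Nat.card V := by
    rw [← Set.ncard_univ]
    exact Set.ncard_le_ncard (Set.subset_univ _) Set.univ.toFinite
  have := Set.ncard_union_add_ncard_inter D₁ D₂ D₁.toFinite D₂.toFinite
  rw [he, Set.ncard_empty] at this
  omega

lemma walk_in_comp {G : SimpleGraph V} {S' D : Set V} (hD : IsCompOf G S' D)
    {a b : V} (p : G.Walk a b) (ha : a ∈ D) (hp : ∀ x ∈ p.support, x ∈ S') :
    b ∈ D := by
  induction p with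
  | nil => exact ha
  | @cons u w c hadj q ih =>
    refine ih (hD.2.2.2 u ha w (hp w ?_) hadj)
      (fun x hx => hp x (by simp [SimpleGraph.Walk.support_cons, hx]))
    simp [SimpleGraph.Walk.support_cons]

lemma x_notin_nbhdB {G : SimpleGraph V} {B : V → Set V} {x : V}
    (hx : IsBigComp G x (B x)) : x ∉ nbhd G (B x) := by
  rintro ⟨-, u, hu, hadj⟩
  exact hx.1.2.1 hu (Or.inr hadj.symm)

lemma Bsub [Finite V] {G : SimpleGraph V} {B : V → Set V} {x y : V}
    (hx : IsBigComp G x (B x)) (hy : IsBigComp G y (B y))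
    (hyA : y ∈ Aside G B x) : B x ⊆ B y := by
  have hyB : y ∉ B x := fun h => hyA (Or.inl h)
  have hyN : y ∉ nbhd G (B x) := fun h => hyA (Or.inr (Or.inr h))
  have hsub : B x ⊆ (insert y (G.neighborSet y))ᶜ := by
    intro u hu
    intro hmem
    rcases hmem with h | h
    · exact hyB (h ▸ hu)
    · exact hyN ⟨hyB, u, hu, (by exact h : G.Adj y u).symm⟩
  obtain ⟨v, hv₁, hv₂⟩ := big_inter hx.2 hy.2
  intro u hu
  obtain ⟨p, hp⟩ := hx.1.2.2.1 v hv₁ u hu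
  exact walk_in_comp hy.1 p hv₂ (fun w hw => hsub (hp w hw))

lemma AsubA [Finite V] {G : SimpleGraph V} {B : V → Set V} {x y : V}
    (hx : IsBigComp G x (B x)) (hy : IsBigComp G y (B y))
    (hyA : y ∈ Aside G B x) :
    Aside G B y ∪ {y} ⊆ Aside G B x ∪ {x} := by
  have hBB := Bsub hx hy hyA
  rintro w (hw | hw)
  swap
  · exact Or.inl (hw ▸ hyA)
  by_cases hwx : w = x
  · exact Or.inr hwx
  refine Or.inl ?_
  rintro (hwB | hwC)
  · exact hw (Or.inl (hBB hwB))
  rcases hwC with h | ⟨hwnB, u, hu, hadj⟩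
  · exact hwx h
  by_cases hwBy : w ∈ B y
  · exact hw (Or.inl hwBy)
  · exact hw (Or.inr (Or.inr ⟨hwBy, u, hBB hu, hadj⟩))

lemma twins_of_eqA [Finite V] {G : SimpleGraph V} {B : V → Set V} {x y : V}
    (hx : IsBigComp G x (B x)) (hy : IsBigComp G y (B y)) (hxy : x ≠ y)
    (heq : Aside G B x ∪ {x} = Aside G B y ∪ {y}) : StarTwins G B x y := by
  have hyAx : y ∈ Aside G B x := by
    have : y ∈ Aside G B x ∪ {x} := heq ▸ (Or.inr rfl)
    rcases this with h | h
    · exact h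
    · exact absurd h.symm hxy
  have hxAy : x ∈ Aside G B y := by
    have : x ∈ Aside G B y ∪ {y} := heq ▸ (Or.inr rfl : x ∈ Aside G B x ∪ {x})
    rcases this with h | h
    · exact h
    · exact absurd h hxy
  have hB : B x = B y := Set.Subset.antisymm (Bsub hx hy hyAx) (Bsub hy hx hxAy)
  refine ⟨hB, ?_, heq⟩
  have h1 : Cside G B x \ {x} = nbhd G (B x) := by
    ext w
    simp only [Cside, Set.mem_diff, Set.mem_insert_iff, Set.mem_singleton_iff]
    constructor
    · rintro ⟨h | h, hne⟩
      · exact absurd h hne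
      · exact h
    · intro h
      exact ⟨Or.inr h, fun he => x_notin_nbhdB hx (he ▸ h)⟩
  have h2 : Cside G B y \ {y} = nbhd G (B y) := by
    ext w
    simp only [Cside, Set.mem_diff, Set.mem_insert_iff, Set.mem_singleton_iff]
    constructor
    · rintro ⟨h | h, hne⟩
      · exact absurd h hne
      · exact h
    · intro h
      exact ⟨Or.inr h, fun he => x_notin_nbhdB hy (he ▸ h)⟩
  rw [h1, h2, hB]

/-- For a stable set `S` of unbalanced vertices with a tiebreaking total order
`O`, the relation `≤_A` is a partial order on `S`. -/
theorem stmt12 [Finite V] (G : SimpleGraph V) (S : Set V) (B : V → Set V)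
    (O : V → ℕ) (hstable : StableSet G S)
    (hB : ∀ v ∈ S, IsBigComp G v (B v))
    (hO : ∀ x ∈ S, ∀ y ∈ S, O x = O y → x = y) :
    (∀ x ∈ S, leA G B O x x) ∧
    (∀ x ∈ S, ∀ y ∈ S, leA G B O x y → leA G B O y x → x = y) ∧
    (∀ x ∈ S, ∀ y ∈ S, ∀ z ∈ S,
      leA G B O x y → leA G B O y z → leA G B O x z) := by
  refine ⟨fun x _ => Or.inl rfl, ?_, ?_⟩
  · intro x hx y hy hxy hyx
    rcases hxy with h | ⟨ht, hO1⟩ | ⟨hnt, hyA⟩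
    · exact h
    · rcases hyx with h | ⟨_, hO2⟩ | ⟨hnt', _⟩
      · exact h.symm
      · omega
      · exact absurd (twins_symm ht) hnt'
    · rcases hyx with h | ⟨ht', _⟩ | ⟨_, hxA⟩
      · exact h.symm
      · exact absurd (twins_symm ht') hnt
      · by_contra hne
        exact hnt (twins_of_eqA (hB x hx) (hB y hy) hne
          (Set.Subset.antisymm (AsubA (hB y hy) (hB x hx) hxA)
            (AsubA (hB x hx) (hB y hy) hyA)))
  · intro x hx y hy z hz hxy hyz
    rcases hxy with rfl | ⟨ht1, hO1⟩ | ⟨hnt1, hyA⟩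
    · exact hyz
    · -- x,y twins
      rcases hyz with rfl | ⟨ht2, hO2⟩ | ⟨hnt2, hzA⟩
      · exact Or.inr (Or.inl ⟨ht1, hO1⟩)
      · exact Or.inr (Or.inl ⟨twins_trans ht1 ht2, by omega⟩)
      · -- z ∈ A y, use A x ∪ {x} = A y ∪ {y}
        have hz' : z ∈ Aside G B x ∪ {x} := ht1.2.2 ▸ (Or.inl hzA)
        rcases hz' with hz' | hz'
        · refine Or.inr (Or.inr ⟨?_, hz'⟩)
          intro ht3
          exact hnt2 (twins_trans (twins_symm ht1) ht3)
        · exact Or.inl hz'.symm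
    · -- y ∈ A x, ¬twins x y
      have key : ∀ w, w ∈ Aside G B y ∪ {y} → w ∈ Aside G B x ∪ {x} :=
        fun w hw => AsubA (hB x hx) (hB y hy) hyA hw
      have notx : ∀ w ∈ Aside G B y, w ≠ x := by
        intro w hw hwx
        subst hwx
        exact hnt1 (twins_of_eqA (hB w hx) (hB y hy)
          (fun h => x_notin_A (h ▸ hyA))
          (Set.Subset.antisymm (AsubA (hB y hy) (hB w hx) hw)
            (AsubA (hB w hx) (hB y hy) hyA)))
      rcases hyz with rfl | ⟨ht2, hO2⟩ | ⟨hnt2, hzA⟩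
      · exact Or.inr (Or.inr ⟨hnt1, hyA⟩)
      · -- y,z twins: z ∈ A y ∪ {y}
        have hz' : z ∈ Aside G B y ∪ {y} := ht2.2.2 ▸ (Or.inr rfl)
        rcases hz' with hz' | hz'
        · rcases key z (Or.inl hz') with hzx | hzx
          · refine Or.inr (Or.inr ⟨?_, hzx⟩)
            intro ht3
            exact hnt1 (twins_trans ht3 (twins_symm ht2))
          · exact absurd hzx (notx z hz')
        · exact hz' ▸ Or.inr (Or.inr ⟨hnt1, hyA⟩)
      · -- z ∈ A y, ¬twins y z
        rcases key z (Or.inl hzA) with hzx | hzx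
        · refine Or.inr (Or.inr ⟨?_, hzx⟩)
          intro ht3
          -- twins x z : then x ∈ A z, and chain gives A x∪{x}=A y∪{y}
          have hxAz : x ∈ Aside G B z := by
            have : x ∈ Aside G B z ∪ {z} := ht3.2.2 ▸ (Or.inr rfl)
            rcases this with h | h
            · exact h
            · exact absurd h.symm (notx z hzA)
          have c1 := AsubA (hB z hz) (hB x hx) hxAz
          have c2 := AsubA (hB y hy) (hB z hz) hzA
          exact hnt1 (twins_of_eqA (hB x hx) (hB y hy)
            (fun h => x_notin_A (h ▸ hyA))
            (Set.Subset.antisymm (fun w hw => c2 (c1 hw)) (fun w hw => key w hw)))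
        · exact absurd hzx (notx z hzA)
end

section
/- Let x and y be unbalanced vertices of an n-vertex graph G with x ≠ y, x non-adjacent to y, x ∈ A(y), and A(y) ∪ {y} = A(x) ∪ {x}. Then x and y are star twins, i.e., C(x)\{x} = C(y)\{y} and B(x) = B(y). -/
universe u v

variable {V : Type u}

lemma absorb_walk {G : SimpleGraph V} {S D : Set V} (hD : IsCompOf G S D) :
    ∀ {a b : V} (p : G.Walk a b), (∀ v ∈ p.support, v ∈ S) → a ∈ D → b ∈ D := by
  intro a b p
  induction p with
  | nil => intro _ ha; exact ha
  | @cons u v w h q ih =>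
    intro hsup ha
    exact ih (fun z hz => hsup z (by simp [hz]))
      (hD.2.2.2 u ha v (hsup v (by simp)) h)

lemma aside_facts {G : SimpleGraph V} {B : V → Set V} {x y : V}
    (hxA : x ∈ Aside G B y) :
    x ∉ B y ∧ x ∉ Cside G B y := by
  rw [Aside, Set.mem_compl_iff, Set.mem_union] at hxA
  push_neg at hxA
  exact hxA

lemma bigcomp_subset {G : SimpleGraph V} {B : V → Set V} {x y : V}
    (hxA : x ∈ Aside G B y) : B y ⊆ (insert x (G.neighborSet x))ᶜ := by
  obtain ⟨hxB, hxC⟩ := aside_facts hxA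
  intro u hu
  simp only [Set.mem_compl_iff, Set.mem_insert_iff, SimpleGraph.mem_neighborSet]
  push_neg
  refine ⟨?_, ?_⟩
  · rintro rfl; exact hxB hu
  · intro hadjxu
    exact hxC (Set.mem_insert_iff.mpr (Or.inr ⟨hxB, u, hu, hadjxu.symm⟩))

/-- If `x ≠ y` are non-adjacent unbalanced vertices with `x ∈ A(y)` and
`A(y) ∪ {y} = A(x) ∪ {x}`, then `x` and `y` are star twins. -/
theorem stmt13 [Finite V] (G : SimpleGraph V) (B : V → Set V) (x y : V)
    (hx : IsBigComp G x (B x)) (hy : IsBigComp G y (B y))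
    (hxy : x ≠ y) (hadj : ¬ G.Adj x y) (hxA : x ∈ Aside G B y)
    (heq : Aside G B y ∪ {y} = Aside G B x ∪ {x}) :
    Cside G B x \ {x} = Cside G B y \ {y} ∧ B x = B y := by
  have hyAx : y ∈ Aside G B x := by
    have hmem : y ∈ Aside G B x ∪ {x} := heq ▸ Set.mem_union_right _ rfl
    rcases hmem with h | h
    · exact h
    · exact absurd h hxy.symm
  -- nonempty intersection
  have hcap : (B x ∩ B y).Nonempty := by
    rw [Set.nonempty_iff_ne_empty]
    intro hdisj
    have hdis : Disjoint (B x) (B y) := Set.disjoint_iff_inter_eq_empty.mpr hdisj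
    have h1 := hx.2
    have h2 := hy.2
    have hle : (B x ∪ B y).ncard ≤ Nat.card V := by
      rw [← Set.ncard_univ]
      exact Set.ncard_le_ncard (Set.subset_univ _) Set.finite_univ
    rw [Set.ncard_union_eq hdis (Set.toFinite _) (Set.toFinite _)] at hle
    omega
  obtain ⟨z, hzx, hzy⟩ := hcap
  have hsub1 : B y ⊆ B x := by
    intro w hw
    obtain ⟨p, hp⟩ := hy.1.2.2.1 z hzy w hw
    exact absorb_walk hx.1 p (fun v hv => bigcomp_subset hxA (hp v hv)) hzx
  have hsub2 : B x ⊆ B y := by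
    intro w hw
    obtain ⟨p, hp⟩ := hx.1.2.2.1 z hzx w hw
    exact absorb_walk hy.1 p (fun v hv => bigcomp_subset hyAx (hp v hv)) hzy
  have hBeq : B x = B y := Set.Subset.antisymm hsub2 hsub1
  refine ⟨?_, hBeq⟩
  -- x ∉ nbhd G (B x), y ∉ nbhd G (B y)
  have hxnb : x ∉ nbhd G (B x) := by
    rw [hBeq]
    rintro ⟨h1, u, hu, h2⟩
    exact (aside_facts hxA).2 (Set.mem_insert_iff.mpr (Or.inr ⟨h1, u, hu, h2⟩))
  have hynb : y ∉ nbhd G (B y) := by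
    rintro ⟨h1, u, hu, h2⟩
    have := hy.1.2.1 hu
    simp only [Set.mem_compl_iff, Set.mem_insert_iff, SimpleGraph.mem_neighborSet] at this
    exact this (Or.inr h2.symm)
  have e1 : Cside G B x \ {x} = nbhd G (B x) := by
    rw [Cside, Set.insert_diff_self_of_notMem hxnb]
  have e2 : Cside G B y \ {y} = nbhd G (B y) := by
    rw [Cside, Set.insert_diff_self_of_notMem hynb]
  rw [e1, e2, hBeq]
end

section
/- Let S be a stable set of unbalanced vertices of G, and let Core(S) be the set of ≤_A-minimal elements of S. Then for any u, v ∈ Core(S): A(u) ∩ C(v) = ∅ and C(u) ∩ A(v) = ∅. -/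
universe u v

variable {V : Type u}

lemma cside_subset_closed_nbhd (G : SimpleGraph V) (B : V → Set V) (v : V)
    (hB : IsCompOf G ((insert v (G.neighborSet v))ᶜ) (B v)) :
    Cside G B v ⊆ insert v (G.neighborSet v) := by
  rintro x hx
  rcases hx with rfl | ⟨hxB, z, hz, hadj⟩
  · exact Set.mem_insert _ _
  · by_contra hx
    exact hxB (hB.2.2.2 z hz x hx hadj)

lemma starTwins_symm (G : SimpleGraph V) (B : V → Set V) {a b : V}
    (h : StarTwins G B a b) : StarTwins G B b a :=
  ⟨h.1.symm, h.2.1.symm, h.2.2.symm⟩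

/-- For `u, v ∈ Core(S)`: `A(u) ∩ C(v) = ∅` and `C(u) ∩ A(v) = ∅`. -/
theorem stmt14 [Finite V] (G : SimpleGraph V) (S : Set V) (B : V → Set V)
    (O : V → ℕ) (hstable : StableSet G S)
    (hB : ∀ v ∈ S, IsBigComp G v (B v))
    (hO : ∀ x ∈ S, ∀ y ∈ S, O x = O y → x = y) :
    ∀ u ∈ CoreS G S B O, ∀ v ∈ CoreS G S B O,
      Aside G B u ∩ Cside G B v = ∅ ∧ Cside G B u ∩ Aside G B v = ∅ := by
  have key : ∀ a ∈ CoreS G S B O, ∀ b ∈ CoreS G S B O,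
      Cside G B a ∩ Aside G B b = ∅ := by
    intro a ha b hb
    rcases eq_or_ne a b with rfl | hab
    · ext x
      simp only [Set.mem_inter_iff, Aside, Set.mem_compl_iff, Set.mem_union,
        Set.mem_empty_iff_false, iff_false, not_and]
      intro hxC hx
      exact hx (Or.inr hxC)
    · have haS : a ∈ S := ha.1
      have hbS : b ∈ S := hb.1
      have hnt : ¬ StarTwins G B a b := by
        intro h
        have hOne : O a ≠ O b := fun e => hab (hO a haS b hbS e)
        rcases lt_or_gt_of_ne hOne with h1 | h1
        · exact hab (hb.2 a haS (Or.inr (Or.inl ⟨h, h1⟩)))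
        · exact hab.symm (ha.2 b hbS (Or.inr (Or.inl ⟨starTwins_symm G B h, h1⟩)))
      have hnt' : ¬ StarTwins G B b a := fun h => hnt (starTwins_symm G B h)
      have haA : a ∉ Aside G B b := by
        intro h
        exact hab.symm (ha.2 b hbS (Or.inr (Or.inr ⟨hnt', h⟩)))
      have haC : a ∉ Cside G B b := by
        intro h
        rcases cside_subset_closed_nbhd G B b (hB b hbS).1 h with rfl | hadj
        · exact hab rfl
        · exact hstable b hbS a haS hadj
      have haB : a ∈ B b := by
        by_contra h
        exact haA (fun hmem => hmem.elim h haC)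
      ext x
      simp only [Set.mem_inter_iff, Set.mem_empty_iff_false, iff_false, not_and]
      intro hxC hxA
      have hxA' : x ∉ B b ∪ Cside G B b := hxA
      rcases cside_subset_closed_nbhd G B a (hB a haS).1 hxC with rfl | hadj
      · exact hxA' (Or.inl haB)
      · have hxB : x ∉ B b := fun h => hxA' (Or.inl h)
        exact hxA' (Or.inr (Or.inr ⟨hxB, a, haB, hadj⟩))
  intro u hu v hv
  refine ⟨?_, key u hu v hv⟩
  rw [Set.inter_comm]
  exact key v hv u hu
end
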